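/- arXiv:1511.03451 — 2 statements merged into one kernel-verified Lean document; each statement's English description precedes it below -/
import Mathlib

section
/- For an odd prime p and H, D ∈ ℤ/p such that t² − Ht − D has no root in ℤ/p, the group (C, ⊙) of points of the conic x² + Hxy − Dy² = 1 over ℤ/p is cyclic (of order p + 1). -/
/-- The conic product `(x₁,y₁) ⊙ (x₂,y₂) = (x₁x₂ + D y₁y₂, y₁x₂ + x₁y₂ + H y₁y₂)`. -/
def conicMul {R : Type*} [CommRing R] (H D : R) (P Q : R × R) : R × R :=
  (P.1 * Q.1 + D * P.2 * Q.2, P.2 * Q.1 + P.1 * Q.2 + H * P.2 * Q.2)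

/-- `n`-fold `⊙`-power of a point, with `P^{⊙0} = (1,0)`. -/
def conicPow {R : Type*} [CommRing R] (H D : R) (P : R × R) : ℕ → R × R
  | 0 => (1, 0)
  | n + 1 => conicMul H D P (conicPow H D P n)

/-! Over a finite field `F` with `q` elements, `(x, y) ↦ x + yθ`, where `θ` is a root of the
irreducible `t² − Ht − D`, identifies `F × F` with the field `K = F(θ)` of `q²` elements and turns
`⊙` into multiplication. The Frobenius `z ↦ z^q` is a nontrivial automorphism of `K`, so it sends
`θ` to the other root `H − θ`, and `(x + yθ)^(q+1) = (x + yθ)(x + y(H − θ)) = x² + Hxy − Dy²`.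
Hence the conic corresponds to the `(q+1)`-th roots of unity in `K`, which form a cyclic group of
order `q + 1` because `q + 1 ∣ q² − 1 = #Kˣ`. -/

open Polynomial

section CommRing

variable {R : Type*} [CommRing R] (H D : R)

def conic : Set (R × R) := {P | P.1 ^ 2 + H * P.1 * P.2 - D * P.2 ^ 2 = 1}

noncomputable def conicPoly : R[X] := X ^ 2 - C H * X - C D

noncomputable def conicEmb (P : R × R) : AdjoinRoot (conicPoly H D) :=
  AdjoinRoot.of _ P.1 + AdjoinRoot.of _ P.2 * AdjoinRoot.root _

lemma conicPoly_monic : (conicPoly H D).Monic := by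
  rw [show conicPoly H D = X ^ (1 + 1) - (C H * X + C D) by rw [conicPoly]; ring]
  exact monic_X_pow_sub (degree_linear_le.trans_lt (by norm_num))

lemma conicPoly_natDegree [Nontrivial R] : (conicPoly H D).natDegree = 2 := by
  rw [show conicPoly H D = C 1 * X ^ 2 + C (-H) * X + C (-D) by
    rw [conicPoly, C_1, C_neg, C_neg]; ring]
  exact natDegree_quadratic one_ne_zero

lemma root_conicPoly_sq :
    AdjoinRoot.root (conicPoly H D) ^ 2 =
      AdjoinRoot.of _ H * AdjoinRoot.root _ + AdjoinRoot.of _ D := by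
  have h : AdjoinRoot.mk (conicPoly H D) (X ^ 2 - C H * X - C D) = 0 := AdjoinRoot.mk_self
  simp only [map_sub, map_mul, map_pow, AdjoinRoot.mk_X, AdjoinRoot.mk_C] at h
  linear_combination h

lemma conicEmb_conicMul (P Q : R × R) :
    conicEmb H D (conicMul H D P Q) = conicEmb H D P * conicEmb H D Q := by
  simp only [conicEmb, conicMul, map_add, map_mul]
  linear_combination -(AdjoinRoot.of _ P.2 * AdjoinRoot.of _ Q.2) * root_conicPoly_sq H D

lemma conicEmb_conicPow (P : R × R) (n : ℕ) :
    conicEmb H D (conicPow H D P n) = conicEmb H D P ^ n := by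
  induction n with
  | zero => simp [conicPow, conicEmb]
  | succ n ih => rw [conicPow, conicEmb_conicMul, ih, pow_succ']

lemma conicEmb_eq_mk (P : R × R) :
    conicEmb H D P = AdjoinRoot.mk _ (C P.2 * X + C P.1) := by
  simp [conicEmb, add_comm]

lemma conicEmb_bijective [Nontrivial R] : Function.Bijective (conicEmb H D) := by
  have hmonic := conicPoly_monic H D
  have hdeg : ∀ x y : R, (C y * X + C x).degree < (conicPoly H D).degree := fun x y ↦ by
    rw [degree_eq_natDegree hmonic.ne_zero, conicPoly_natDegree]
    exact degree_linear_le.trans_lt (by norm_num)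
  constructor
  · intro P Q h
    have hmod := congrArg (AdjoinRoot.modByMonicHom hmonic) h
    simp only [conicEmb_eq_mk, AdjoinRoot.modByMonicHom_mk,
      (modByMonic_eq_self_iff hmonic).2 (hdeg _ _)] at hmod
    exact Prod.ext (by simpa using congrArg (coeff · 0) hmod)
      (by simpa using congrArg (coeff · 1) hmod)
  · intro z
    obtain ⟨g, rfl⟩ := AdjoinRoot.mk_surjective z
    set r := g %ₘ conicPoly H D
    have hr : r.natDegree < 2 := conicPoly_natDegree H D ▸
      natDegree_modByMonic_lt g hmonic fun h ↦ by simpa [h] using conicPoly_natDegree H D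
    refine ⟨(r.coeff 0, r.coeff 1), ?_⟩
    rw [conicEmb_eq_mk, ← eq_X_add_C_of_natDegree_le_one (Nat.le_of_lt_succ hr),
      AdjoinRoot.mk_eq_mk]
    exact ⟨-(g /ₘ conicPoly H D), by linear_combination modByMonic_add_div g (conicPoly H D)⟩

end CommRing

section Field

variable {F : Type*} [Field F] (H D : F)

lemma conicPoly_irreducible (hirr : ∀ t : F, t ^ 2 - H * t - D ≠ 0) :
    Irreducible (conicPoly H D) := by
  rw [(conicPoly_monic H D).irreducible_iff_roots_eq_zero_of_degree_le_three
    (conicPoly_natDegree H D).ge ((conicPoly_natDegree H D).trans_le (by norm_num))]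
  refine Multiset.eq_zero_of_forall_notMem fun t ht ↦ hirr t ?_
  simpa [conicPoly] using (mem_roots (conicPoly_monic H D).ne_zero).1 ht

lemma finrank_adjoinRoot_conicPoly : Module.finrank F (AdjoinRoot (conicPoly H D)) = 2 :=
  (AdjoinRoot.powerBasis' (conicPoly_monic H D)).finrank.trans (conicPoly_natDegree H D)

end Field

lemma exists_isPrimitiveRoot_of_dvd_card_sub_one {K : Type*} [Field K] [Finite K] {n : ℕ}
    [NeZero n] (hn : n ∣ Nat.card K - 1) : ∃ ζ : K, IsPrimitiveRoot ζ n := by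
  rw [← card_rootsOfUnity_eq_iff_exists_isPrimitiveRoot, rootsOfUnity_eq_ker,
    IsCyclic.card_powMonoidHom_ker, Nat.card_units, Nat.gcd_eq_right hn]

section FiniteField

variable {F : Type*} [Field F] [Fintype F] (H D : F)

instance : Finite (AdjoinRoot (conicPoly H D)) :=
  Finite.of_surjective _ (conicEmb_bijective H D).2

lemma natCard_adjoinRoot_conicPoly :
    Nat.card (AdjoinRoot (conicPoly H D)) = Fintype.card F ^ 2 := by
  rw [← Nat.card_congr (Equiv.ofBijective _ (conicEmb_bijective H D)), Nat.card_prod,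
    Nat.card_eq_fintype_card, sq]

variable [Fact (Irreducible (conicPoly H D))]

lemma root_conicPoly_pow_card :
    AdjoinRoot.root (conicPoly H D) ^ Fintype.card F =
      AdjoinRoot.of _ H - AdjoinRoot.root (conicPoly H D) := by
  set σ := FiniteField.frobeniusAlgHom F (AdjoinRoot (conicPoly H D))
  set r := AdjoinRoot.root (conicPoly H D)
  have hσ : σ r = r ^ Fintype.card F := rfl
  have hσ_order : orderOf σ = 2 :=
    (FiniteField.orderOf_frobeniusAlgHom F _).trans (finrank_adjoinRoot_conicPoly H D)
  have hσ_ne_one : σ ≠ 1 := fun h ↦ by simp [h] at hσ_order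
  have hne : σ r ≠ r := fun h ↦ hσ_ne_one (AdjoinRoot.algHom_ext h)
  have hroot : σ r ^ 2 = AdjoinRoot.of _ H * σ r + AdjoinRoot.of _ D := by
    simpa [← AdjoinRoot.algebraMap_eq] using congrArg σ (root_conicPoly_sq H D)
  have hfactor : (σ r - r) * (σ r - (AdjoinRoot.of _ H - r)) = 0 := by
    linear_combination hroot - root_conicPoly_sq H D
  rw [← hσ]
  exact sub_eq_zero.1 ((mul_eq_zero.1 hfactor).resolve_left (sub_ne_zero.2 hne))

lemma conicEmb_pow_card_add_one (P : F × F) :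
    conicEmb H D P ^ (Fintype.card F + 1) =
      AdjoinRoot.of _ (P.1 ^ 2 + H * P.1 * P.2 - D * P.2 ^ 2) := by
  have hfrob : conicEmb H D P ^ Fintype.card F =
      AdjoinRoot.of _ P.1 + AdjoinRoot.of _ P.2 * (AdjoinRoot.of _ H - AdjoinRoot.root _) := by
    rw [← root_conicPoly_pow_card]
    change FiniteField.frobeniusAlgHom F _ (conicEmb H D P) = _
    simp only [conicEmb, map_add, map_mul, ← AdjoinRoot.algebraMap_eq, AlgHom.commutes]
    rfl
  rw [pow_succ, hfrob, conicEmb]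
  simp only [map_add, map_sub, map_mul, map_pow]
  linear_combination -(AdjoinRoot.of (conicPoly H D) P.2 ^ 2) * root_conicPoly_sq H D

lemma mem_conic_iff_conicEmb_pow_eq_one (P : F × F) :
    P ∈ conic H D ↔ conicEmb H D P ^ (Fintype.card F + 1) = 1 := by
  rw [conicEmb_pow_card_add_one, ← map_one (AdjoinRoot.of _),
    (AdjoinRoot.of (conicPoly H D)).injective.eq_iff]
  rfl

lemma exists_isPrimitiveRoot_card_add_one :
    ∃ ζ : AdjoinRoot (conicPoly H D), IsPrimitiveRoot ζ (Fintype.card F + 1) := by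
  refine exists_isPrimitiveRoot_of_dvd_card_sub_one ⟨Fintype.card F - 1, ?_⟩
  rw [natCard_adjoinRoot_conicPoly, ← one_pow 2, Nat.sq_sub_sq, one_pow]

lemma exists_conic_generator :
    ∃ g ∈ conic H D, ∀ P ∈ conic H D, ∃ n : ℕ, conicPow H D g n = P := by
  obtain ⟨ζ, hζ⟩ := exists_isPrimitiveRoot_card_add_one H D
  obtain ⟨g, rfl⟩ := (conicEmb_bijective H D).2 ζ
  refine ⟨g, (mem_conic_iff_conicEmb_pow_eq_one H D g).2 hζ.pow_eq_one, fun P hP ↦ ?_⟩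
  obtain ⟨n, -, hn⟩ := hζ.eq_pow_of_pow_eq_one ((mem_conic_iff_conicEmb_pow_eq_one H D P).1 hP)
  exact ⟨n, (conicEmb_bijective H D).1 (by rw [conicEmb_conicPow, hn])⟩

lemma ncard_conic : (conic H D).ncard = Fintype.card F + 1 := by
  obtain ⟨ζ, hζ⟩ := exists_isPrimitiveRoot_card_add_one H D
  have himage : conicEmb H D '' conic H D =
      ↑(nthRootsFinset (Fintype.card F + 1) (1 : AdjoinRoot (conicPoly H D))) := by
    ext z
    obtain ⟨P, rfl⟩ := (conicEmb_bijective H D).2 z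
    rw [(conicEmb_bijective H D).1.mem_set_image, Finset.mem_coe,
      mem_nthRootsFinset (Nat.succ_pos _), mem_conic_iff_conicEmb_pow_eq_one]
  rw [← Set.ncard_image_of_injective _ (conicEmb_bijective H D).1, himage, Set.ncard_coe_finset,
    hζ.card_nthRootsFinset]

end FiniteField

theorem conic_cyclic_general (p : ℕ) (hp : p.Prime) (H D : ZMod p)
    (hirr : ∀ t : ZMod p, t ^ 2 - H * t - D ≠ 0) :
    (∃ g ∈ {P : ZMod p × ZMod p | P.1 ^ 2 + H * P.1 * P.2 - D * P.2 ^ 2 = 1},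
      ∀ P ∈ {P : ZMod p × ZMod p | P.1 ^ 2 + H * P.1 * P.2 - D * P.2 ^ 2 = 1},
        ∃ n : ℕ, conicPow H D g n = P) ∧
    Set.ncard {P : ZMod p × ZMod p | P.1 ^ 2 + H * P.1 * P.2 - D * P.2 ^ 2 = 1}
      = p + 1 := by
  have := Fact.mk hp
  have := Fact.mk (conicPoly_irreducible H D hirr)
  exact ⟨exists_conic_generator H D, (ncard_conic H D).trans (by rw [ZMod.card])⟩

/-- for an odd prime `p` and `H, D ∈ ℤ/p` such that `t² − Ht − D`
has no root in `ℤ/p`, the group `(C, ⊙)` of points of the conic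
`x² + Hxy − Dy² = 1` over `ℤ/p` is cyclic (of order `p + 1`): there is a point
`g ∈ C` whose `⊙`-powers exhaust `C`. -/
theorem conic_cyclic (p : ℕ) (hp : p.Prime) (hodd : Odd p) (H D : ZMod p)
    (hirr : ∀ t : ZMod p, t ^ 2 - H * t - D ≠ 0) :
    (∃ g ∈ {P : ZMod p × ZMod p | P.1 ^ 2 + H * P.1 * P.2 - D * P.2 ^ 2 = 1},
      ∀ P ∈ {P : ZMod p × ZMod p | P.1 ^ 2 + H * P.1 * P.2 - D * P.2 ^ 2 = 1},
        ∃ n : ℕ, conicPow H D g n = P) ∧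
    Set.ncard {P : ZMod p × ZMod p | P.1 ^ 2 + H * P.1 * P.2 - D * P.2 ^ 2 = 1}
      = p + 1 :=
  conic_cyclic_general p hp H D hirr
end

section
/- Analogue of Fermat's little theorem on the conic: for an odd prime p, H, D ∈ ℤ/p with t² − Ht − D having no root in ℤ/p, and any point (x,y) ∈ C, the (p+2)-nd power of (x,y) with respect to ⊙ equals (x,y): (x,y)^{⊙(p+2)} = (x,y). -/
open Polynomial

/-- analogue of Fermat's little theorem on the conic: for an odd
prime `p`, `H, D ∈ ℤ/p` with `t² − Ht − D` having no root in `ℤ/p`, and any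
point `(x,y) ∈ C`, one has `(x,y)^{⊙(p+2)} = (x,y)`. -/
theorem conic_fermat (p : ℕ) (hp : p.Prime) (hodd : Odd p) (H D : ZMod p)
    (hirr : ∀ t : ZMod p, t ^ 2 - H * t - D ≠ 0)
    (x y : ZMod p) (hxy : x ^ 2 + H * x * y - D * y ^ 2 = 1) :
    conicPow H D (x, y) (p + 2) = (x, y) := by
  haveI : Fact p.Prime := ⟨hp⟩
  set f : (ZMod p)[X] := X ^ 2 - C H * X - C D with hf
  have hdeg : f.natDegree = 2 := by rw [hf]; compute_degree!
  have hmonic : f.Monic := by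
    have h1 : f = X ^ 2 - (C H * X + C D) := by rw [hf]; ring
    rw [h1]
    apply Polynomial.monic_X_pow_sub
    refine lt_of_le_of_lt ?_ (by norm_num : (1 : WithBot ℕ) < 2)
    compute_degree
  have hroots : f.roots = 0 := by
    rw [Multiset.eq_zero_iff_forall_notMem]
    intro t ht
    rw [Polynomial.mem_roots hmonic.ne_zero, Polynomial.IsRoot] at ht
    apply hirr t
    simpa [hf] using ht
  have hirrf : Irreducible f :=
    (hmonic.irreducible_iff_roots_eq_zero_of_degree_le_three (by omega) (by omega)).mpr hroots
  haveI : Fact (Irreducible f) := ⟨hirrf⟩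
  set A := AdjoinRoot f with hA
  set i : ZMod p →+* A := algebraMap _ _ with hi
  have hinj : Function.Injective i := i.injective
  haveI : CharP A p := charP_of_injective_ringHom hinj p
  set α : A := AdjoinRoot.root f with hα0
  have hα : α ^ 2 = i H * α + i D := by
    have h0 := AdjoinRoot.eval₂_root f
    rw [hf] at h0
    simp only [Polynomial.eval₂_sub, Polynomial.eval₂_mul, Polynomial.eval₂_pow,
      Polynomial.eval₂_X, Polynomial.eval₂_C] at h0
    rw [hi, AdjoinRoot.algebraMap_eq]
    linear_combination h0
  have hic : ∀ c : ZMod p, (i c) ^ p = i c := by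
    intro c; rw [← map_pow, ZMod.pow_card]
  have hnotin : ∀ c : ZMod p, α ≠ i c := by
    intro c hc
    apply hirr c
    apply hinj
    rw [map_sub, map_sub, map_pow, map_mul, map_zero, ← hc]
    linear_combination hα
  have hfrob : (α ^ p) ^ 2 = i H * α ^ p + i D := by
    have h2 : (α ^ p) ^ 2 = (α ^ 2) ^ p := by
      rw [← pow_mul, ← pow_mul, mul_comm]
    rw [h2, hα, add_pow_char, mul_pow, hic, hic]
  have hαp : α ^ p = i H - α := by
    have hm : (α ^ p - α) * (α ^ p - (i H - α)) = 0 := by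
      linear_combination hfrob - hα
    rcases mul_eq_zero.mp hm with h | h
    · exfalso
      have hfix : α ^ p = α := by linear_combination h
      set g : A[X] := X ^ p - X with hg
      have hgne : g ≠ 0 := FiniteField.X_pow_card_sub_X_ne_zero A hp.one_lt
      have hgd : g.natDegree = p := FiniteField.X_pow_card_sub_X_natDegree_eq A hp.one_lt
      set Z : Finset A := insert α (Finset.univ.image i) with hZ
      have hZcard : Z.card = p + 1 := by
        rw [hZ, Finset.card_insert_of_notMem, Finset.card_image_of_injective _ hinj]
        · simp [ZMod.card]
        · simp only [Finset.mem_image, Finset.mem_univ, true_and, not_exists]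
          intro c hc
          exact hnotin c hc.symm
      have hsub : Z.val ⊆ g.roots := by
        intro z hz
        rw [Finset.mem_val, hZ, Finset.mem_insert] at hz
        rw [Polynomial.mem_roots hgne]
        rcases hz with rfl | hz
        · simp [hg, Polynomial.IsRoot, hfix]
        · obtain ⟨c, _, rfl⟩ := Finset.mem_image.mp hz
          simp [hg, Polynomial.IsRoot, hic c]
      have := Polynomial.card_le_degree_of_subset_roots hsub
      omega
    · linear_combination h
  -- the embedding of the conic into A
  set φ : ZMod p × ZMod p → A := fun P => i P.1 + i P.2 * α with hφ

  have hφmul : ∀ P Q, φ (conicMul H D P Q) = φ P * φ Q := by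
    intro P Q
    simp only [hφ, conicMul, map_add, map_mul]
    linear_combination (-(i P.2 * i Q.2)) * hα
  have hφpow : ∀ n, φ (conicPow H D (x, y) n) = (φ (x, y)) ^ n := by
    intro n
    induction n with
    | zero => simp [conicPow, hφ]
    | succ n ih => rw [conicPow, hφmul, ih, pow_succ, mul_comm]
  set z : A := i x + i y * α with hz
  have hφxy : φ (x, y) = z := rfl

  have hz1 : z ^ (p + 1) = 1 := by
    have hzp : z ^ p = i x + i y * (i H - α) := by
      rw [hz, add_pow_char, mul_pow, hic, hic, hαp]
    have key : (i x + i y * (i H - α)) * (i x + i y * α) = i (x ^ 2 + H * x * y - D * y ^ 2) := by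
      simp only [map_add, map_sub, map_mul, map_pow]
      linear_combination (-(i y * i y)) * hα
    rw [pow_succ, hzp, hz, key, hxy, map_one]
  have hzfin : z ^ (p + 2) = z := by
    have : z ^ (p + 2) = z ^ (p + 1) * z := by ring
    rw [this, hz1, one_mul]
  -- injectivity of φ
  have hcoords : ∀ a b a' b' : ZMod p, i a + i b * α = i a' + i b' * α → a = a' ∧ b = b' := by
    intro a b a' b' h
    have h0 : i (a - a') + i (b - b') * α = 0 := by
      simp only [map_sub]; linear_combination h
    have hmk : AdjoinRoot.mk f (C (a - a') + C (b - b') * X) = 0 := by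
      rw [map_add, map_mul, AdjoinRoot.mk_C, AdjoinRoot.mk_C, AdjoinRoot.mk_X]
      rw [hi, AdjoinRoot.algebraMap_eq] at h0
      exact h0
    rw [← map_zero (AdjoinRoot.mk f), AdjoinRoot.mk_eq_mk, sub_zero] at hmk
    have hzero : C (a - a') + C (b - b') * X = 0 := by
      by_contra hne
      have hd := Polynomial.degree_le_of_dvd hmk hne
      have hdf : f.degree = 2 := by
        rw [Polynomial.degree_eq_natDegree hmonic.ne_zero, hdeg]; rfl
      have hdg : (C (a - a') + C (b - b') * X).degree ≤ 1 := by
        compute_degree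
      rw [hdf] at hd
      have : (2 : WithBot ℕ) ≤ 1 := le_trans hd hdg
      norm_num at this
    have ha : a - a' = 0 := by
      have := congrArg (fun q => Polynomial.coeff q 0) hzero
      simpa using this
    have hb : b - b' = 0 := by
      have := congrArg (fun q => Polynomial.coeff q 1) hzero
      simpa using this
    exact ⟨by linear_combination ha, by linear_combination hb⟩
  have hfinal := hφpow (p + 2)
  rw [hφxy, hzfin, hz] at hfinal
  simp only [hφ] at hfinal
  obtain ⟨h1, h2⟩ := hcoords _ _ _ _ hfinal
  exact Prod.ext h1 h2
end
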